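/- arXiv:1807.02432 — 2 statements merged into one kernel-verified Lean document; each statement's English description precedes it below -/
import Mathlib

section
/- If a signed graph G satisfies conditions (I) and (II), then the underlying simple graph G̃⁺ = G⁺∪G⁻ is chordal. -/
open scoped Classical

universe u v

/-! ## Signed graphs -/

/-- A signed graph: a pair of simple graphs (positive and negative parts) on a common
vertex set. -/
structure SignedGraph (V : Type u) where
  pos : SimpleGraph V
  neg : SimpleGraph V

namespace SignedGraph

variable {V : Type u}

/-- Adjacency by an edge of a given sign (`true` = negative edge, `false` = positive edge). -/
def EdgeAdj (G : SignedGraph V) (s : Bool) (u v : V) : Prop :=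
  cond s (G.neg.Adj u v) (G.pos.Adj u v)

/-- A cycle of a signed graph: distinct vertices `vert 0, …, vert (n-1)` (`n ≥ 3`) with an
edge of sign `sgn i` between `vert i` and `vert ((i+1) % n)` for each `i < n`. -/
structure Cycle (G : SignedGraph V) where
  n : ℕ
  three_le : 3 ≤ n
  vert : ℕ → V
  inj : ∀ i j, i < n → j < n → vert i = vert j → i = j
  sgn : ℕ → Bool
  adj : ∀ i, i < n → G.EdgeAdj (sgn i) (vert i) (vert ((i + 1) % n))

/-- A cycle is balanced if it uses an even number of negative edges. -/
def Cycle.Balanced {G : SignedGraph V} (C : G.Cycle) : Prop :=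
  Even (((Finset.range C.n).filter fun i => C.sgn i = true).card)

/-- A chord of a cycle: an edge of `G` joining two non-consecutive vertices of the cycle. -/
def Cycle.IsChord {G : SignedGraph V} (C : G.Cycle) (i j : ℕ) : Prop :=
  i < C.n ∧ j < C.n ∧ i ≠ j ∧ j ≠ (i + 1) % C.n ∧ i ≠ (j + 1) % C.n ∧
    (G.pos.Adj (C.vert i) (C.vert j) ∨ G.neg.Adj (C.vert i) (C.vert j))

/-- The chord of sign `s` between positions `i < j` of the cycle `C` separates `C` into two
balanced cycles (for a balanced cycle it suffices that one of the two pieces is balanced). -/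
def Cycle.BalancedChordAt {G : SignedGraph V} (C : G.Cycle) (i j : ℕ) (s : Bool) : Prop :=
  i < j ∧ C.IsChord i j ∧ G.EdgeAdj s (C.vert i) (C.vert j) ∧
    Even ((((Finset.Ico i j).filter fun k => C.sgn k = true).card) + cond s 1 0) ∧
    Even ((((Finset.range C.n \ Finset.Ico i j).filter fun k => C.sgn k = true).card)
      + cond s 1 0)

/-- The cycle has a balanced chord. -/
def Cycle.HasBalancedChord {G : SignedGraph V} (C : G.Cycle) : Prop :=
  ∃ i j s, C.BalancedChordAt i j s

/-- Condition (I): a signed graph is balanced chordal if every balanced cycle of length at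
least four has a balanced chord. -/
def BalancedChordal (G : SignedGraph V) : Prop :=
  ∀ C : G.Cycle, 4 ≤ C.n → C.Balanced → C.HasBalancedChord

/-- The cycle `C` is an induced subgraph of `G`: the only edges of `G` among its vertices are
the edges of the cycle, each single, with the sign it has in the cycle. -/
def Cycle.IsInduced {G : SignedGraph V} (C : G.Cycle) : Prop :=
  ∀ i j, i < C.n → j < C.n → ∀ s : Bool,
    (G.EdgeAdj s (C.vert i) (C.vert j) ↔
      ((j = (i + 1) % C.n ∧ C.sgn i = s) ∨ (i = (j + 1) % C.n ∧ C.sgn j = s)))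

/-- Condition (II): no induced subgraph of `G` is an unbalanced cycle (of length `≥ 3`). -/
def NoInducedUnbalancedCycle (G : SignedGraph V) : Prop :=
  ¬ ∃ C : G.Cycle, C.IsInduced ∧ ¬ C.Balanced

/-- Switching a signed graph by `ν : V → Bool`. -/
def switch (G : SignedGraph V) (ν : V → Bool) : SignedGraph V where
  pos := SimpleGraph.fromRel fun u w => if ν u = ν w then G.pos.Adj u w else G.neg.Adj u w
  neg := SimpleGraph.fromRel fun u w => if ν u = ν w then G.neg.Adj u w else G.pos.Adj u w

/-- `G` contains an induced copy of the signed graph `H`. -/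
def HasInducedCopy {W : Type v} (G : SignedGraph V) (H : SignedGraph W) : Prop :=
  ∃ f : W → V, Function.Injective f ∧
    (∀ a b : W, G.pos.Adj (f a) (f b) ↔ H.pos.Adj a b) ∧
    (∀ a b : W, G.neg.Adj (f a) (f b) ↔ H.neg.Adj a b)

end SignedGraph

/-- The obstruction graph `G₀` of Figure 1: vertices `0,1,2,3` (= `1,2,3,4` in the paper),
double edges `{0,1}, {2,3}`, positive single edges `{0,3}, {1,3}, {1,2}`, negative single
edge `{0,2}`. -/
def obstruction : SignedGraph (Fin 4) where
  pos := SimpleGraph.fromRel fun a b =>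
    (a = 0 ∧ b = 1) ∨ (a = 2 ∧ b = 3) ∨ (a = 0 ∧ b = 3) ∨ (a = 1 ∧ b = 3) ∨ (a = 1 ∧ b = 2)
  neg := SimpleGraph.fromRel fun a b =>
    (a = 0 ∧ b = 1) ∨ (a = 2 ∧ b = 3) ∨ (a = 0 ∧ b = 2)

namespace SignedGraph

variable {V : Type u}

/-- Condition (III): no induced subgraph of `G` is switching equivalent to the obstruction
graph `G₀`. -/
def NoInducedObstruction (G : SignedGraph V) : Prop :=
  ¬ ∃ ν : Fin 4 → Bool, G.HasInducedCopy (obstruction.switch ν)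

/-- The signed graph `G̃ = (G⁺ ∪ G⁻, G⁺ ∩ G⁻)`. -/
def tilde (G : SignedGraph V) : SignedGraph V :=
  ⟨G.pos ⊔ G.neg, G.pos ⊓ G.neg⟩

/-- The induced subgraph of a signed graph on a set of vertices. -/
def induce (G : SignedGraph V) (W : Set V) : SignedGraph W :=
  ⟨SimpleGraph.induce W G.pos, SimpleGraph.induce W G.neg⟩

/-- A vertex `v` is link simplicial: for any two edges at `v` with distinct other endpoints
there is an edge making a balanced triangle with them. -/
def LinkSimplicial (G : SignedGraph V) (v : V) : Prop :=
  ∀ (u u' : V) (s s' : Bool), u ≠ u' → G.EdgeAdj s v u → G.EdgeAdj s' v u' →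
    ∃ s'' : Bool, G.EdgeAdj s'' u u' ∧
      Even ((cond s 1 0 + cond s' 1 0 + cond s'' 1 0 : ℕ))

/-- A link elimination ordering: an enumeration of the vertices such that each vertex is
link simplicial in the induced subgraph on it and its predecessors. -/
def HasLinkElimOrdering (G : SignedGraph V) [Fintype V] : Prop :=
  ∃ e : Fin (Fintype.card V) ≃ V, ∀ i : Fin (Fintype.card V),
    (G.induce {w : V | ∃ j, j ≤ i ∧ e j = w}).LinkSimplicial ⟨e i, ⟨i, le_refl i, rfl⟩⟩

/-- A complete signed graph `K±`: any two distinct vertices are joined by a double edge. -/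
def IsCompleteSigned (G : SignedGraph V) : Prop :=
  ∀ u v : V, u ≠ v → G.pos.Adj u v ∧ G.neg.Adj u v

end SignedGraph

/-- A threshold graph: it can be built from the one-vertex graph (more generally from the
empty graph) by successively adding isolated or dominating vertices; equivalently there is
an ordering of the vertices in which each vertex is isolated or dominating among its
predecessors. -/
def SimpleGraph.IsThresholdGraph {V : Type u} [Fintype V] (G : SimpleGraph V) : Prop :=
  ∃ e : Fin (Fintype.card V) ≃ V, ∀ i : Fin (Fintype.card V),
    (∀ j, j < i → ¬ G.Adj (e i) (e j)) ∨ (∀ j, j < i → G.Adj (e i) (e j))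

/-- A simple graph is chordal if every cycle of length at least four has a chord. -/
def SimpleGraph.IsChordalGraph {V : Type u} (G : SimpleGraph V) : Prop :=
  ∀ n : ℕ, 4 ≤ n → ∀ v : ℕ → V,
    (∀ i j, i < n → j < n → v i = v j → i = j) →
    (∀ i, i < n → G.Adj (v i) (v ((i + 1) % n))) →
    ∃ i j, i < j ∧ j < n ∧ j ≠ i + 1 ∧ ¬(i = 0 ∧ j = n - 1) ∧ G.Adj (v i) (v j)

/-! ## Hyperplane arrangements -/

noncomputable section Arrangements

/-- The signed-graphic arrangement `A(G)` in `K^V`, given by its defining linear forms: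
`x i` for each vertex, `x i - x j` for positive edges and `x i + x j` for negative edges. -/
def signedArr (K : Type u) [Field K] {V : Type v} [Fintype V] (G : SignedGraph V) :
    Finset ((V → K) →ₗ[K] K) :=
  (Finset.univ.image fun i : V => LinearMap.proj i)
    ∪ ((Finset.univ.filter fun p : V × V => G.pos.Adj p.1 p.2).image fun p =>
        (LinearMap.proj p.1 : (V → K) →ₗ[K] K) - LinearMap.proj p.2)
    ∪ ((Finset.univ.filter fun p : V × V => G.neg.Adj p.1 p.2).image fun p =>
        (LinearMap.proj p.1 : (V → K) →ₗ[K] K) + LinearMap.proj p.2)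

/-- The linear polynomial in `K[x_i : i ∈ V]` corresponding to a linear form on `K^V`. -/
def linToPoly (K : Type u) [Field K] {V : Type v} [Fintype V] (φ : (V → K) →ₗ[K] K) :
    MvPolynomial V K :=
  ∑ i : V, MvPolynomial.C (φ (Pi.single i 1)) * MvPolynomial.X i

/-- The module `D(A)` of logarithmic derivations of an arrangement given by linear forms. -/
def logDerModule (K : Type u) [Field K] {V : Type v} [Fintype V]
    (A : Finset ((V → K) →ₗ[K] K)) :
    Submodule (MvPolynomial V K) (Derivation K (MvPolynomial V K) (MvPolynomial V K)) where
  carrier := {θ | ∀ φ ∈ A, θ (linToPoly K φ) ∈ Ideal.span {linToPoly K φ}}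
  add_mem' := by
    intro θ η hθ hη φ hφ
    simpa using Ideal.add_mem _ (hθ φ hφ) (hη φ hφ)
  zero_mem' := by
    intro φ hφ
    simp
  smul_mem' := by
    intro c θ hθ φ hφ
    simpa [smul_eq_mul] using Ideal.mul_mem_left _ c (hθ φ hφ)

/-- An arrangement is free if its module of logarithmic derivations is free. -/
def ArrIsFree (K : Type u) [Field K] {V : Type v} [Fintype V]
    (A : Finset ((V → K) →ₗ[K] K)) : Prop :=
  Module.Free (MvPolynomial V K) (logDerModule K A)

/-- The intersection lattice: all intersections of subfamilies of a finite family of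
subspaces (the empty intersection being the whole space). -/
def interLattice (K : Type u) [Field K] {M : Type v} [AddCommGroup M] [Module K M]
    (H : Finset (Submodule K M)) : Finset (Submodule K M) :=
  H.powerset.image fun B => B.inf id

/-- The one-variable Möbius function of the intersection lattice `L` (ordered by reverse
inclusion): `μ(whole space) = 1` and `μ(X) = -∑_{Y < X} μ(Y)`. -/
def mobiusFn (K : Type u) [Field K] {M : Type v} [AddCommGroup M] [Module K M]
    [FiniteDimensional K M] (L : Finset (Submodule K M)) (X : Submodule K M) : ℤ :=
  if X = ⊤ then 1
  else - ∑ Y ∈ (L.filter fun Y => X < Y).attach, mobiusFn K L Y.1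
termination_by Module.finrank K M - Module.finrank K X
decreasing_by
  have h1 : X < Y.1 := (Finset.mem_filter.mp Y.2).2
  have h2 : Module.finrank K X < Module.finrank K Y.1 :=
    Submodule.finrank_lt_finrank_of_lt h1
  have h3 : Module.finrank K (Y.1 : Submodule K M) ≤ Module.finrank K M :=
    Submodule.finrank_le Y.1
  omega

/-- The characteristic polynomial `χ(A,t) = ∑_{X ∈ L(A)} μ(X) t^{dim X}` of an arrangement
given by its defining linear forms. -/
def arrCharPoly (K : Type u) [Field K] {M : Type v} [AddCommGroup M] [Module K M]
    [FiniteDimensional K M] (A : Finset (M →ₗ[K] K)) : Polynomial ℤ :=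
  ∑ X ∈ interLattice K (A.image LinearMap.ker),
    Polynomial.C (mobiusFn K (interLattice K (A.image LinearMap.ker)) X) *
      Polynomial.X ^ Module.finrank K X

/-- The restriction `A^H` of the arrangement `A` to the hyperplane `H = ker φ`, given by
the restrictions of the defining forms of the hyperplanes other than `H`. -/
def restrArr (K : Type u) [Field K] {M : Type v} [AddCommGroup M] [Module K M]
    (A : Finset (M →ₗ[K] K)) (φ : M →ₗ[K] K) : Finset (↥(LinearMap.ker φ) →ₗ[K] K) :=
  (A.filter fun ψ => LinearMap.ker ψ ≠ LinearMap.ker φ).image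
    fun ψ => ψ ∘ₗ (LinearMap.ker φ).subtype

/-- Auxiliary fuelled definition of divisional freeness. -/
def DivFreeAux (K : Type u) [Field K] (n : ℕ) (M : Type v) [AddCommGroup M] [Module K M]
    [FiniteDimensional K M] (A : Finset (M →ₗ[K] K)) : Prop :=
  match n with
  | 0 => A = ∅
  | Nat.succ m => A = ∅ ∨ ∃ φ ∈ A, φ ≠ 0 ∧
      DivFreeAux K m ↥(LinearMap.ker φ) (restrArr K A φ) ∧
      arrCharPoly K (restrArr K A φ) ∣ arrCharPoly K A

/-- Divisional freeness: the empty arrangement is divisionally free, and `A` is divisionally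
free if some hyperplane `H ∈ A` has `A^H` divisionally free with `χ(A^H,t) ∣ χ(A,t)`.
(Each restriction drops the dimension by exactly one, so `finrank M` steps suffice.) -/
def ArrIsDivFree (K : Type u) [Field K] {M : Type v} [AddCommGroup M] [Module K M]
    [FiniteDimensional K M] (A : Finset (M →ₗ[K] K)) : Prop :=
  DivFreeAux K (Module.finrank K M) M A

/-- The meet of two elements in the intersection lattice ordered by reverse inclusion:
the smallest member of `L` containing both. -/
def latticeMeet (K : Type u) [Field K] {M : Type v} [AddCommGroup M] [Module K M]
    (L : Finset (Submodule K M)) (x y : Submodule K M) : Submodule K M :=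
  (L.filter fun z => x ≤ z ∧ y ≤ z).inf id

/-- `m` is a modular element of the intersection lattice `L` (ordered by reverse
inclusion): for all `a ≤ b` in `L`, `a ∨ (m ∧ b) = (a ∨ m) ∧ b`. -/
def ModularIn (K : Type u) [Field K] {M : Type v} [AddCommGroup M] [Module K M]
    (L : Finset (Submodule K M)) (m : Submodule K M) : Prop :=
  m ∈ L ∧ ∀ a ∈ L, ∀ b ∈ L, b ≤ a →
    a ⊓ latticeMeet K L m b = latticeMeet K L (a ⊓ m) b

/-- An arrangement is supersolvable if its intersection lattice has a maximal chain of
modular elements. -/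
def ArrSupersolvable (K : Type u) [Field K] {M : Type v} [AddCommGroup M] [Module K M]
    (A : Finset (M →ₗ[K] K)) : Prop :=
  ∃ C : Set (Submodule K M),
    C ⊆ ↑(interLattice K (A.image LinearMap.ker)) ∧
    IsChain (· ≤ ·) C ∧
    (∀ C' : Set (Submodule K M),
        C' ⊆ ↑(interLattice K (A.image LinearMap.ker)) → IsChain (· ≤ ·) C' → C ⊆ C' →
          C' = C) ∧
    ∀ m ∈ C, ModularIn K (interLattice K (A.image LinearMap.ker)) m

end Arrangements

/-!
Give each edge of a cycle of `G⁺ ∪ G⁻` a sign it carries in `G`. If the resulting signed cycle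
is balanced, (I) provides a chord. If it is unbalanced but uses a double edge, switching the
sign of that edge makes it balanced. Otherwise (II) says the cycle is not induced, and since
its edges are single, the extra edge must be a chord.
-/

theorem Finset.even_card_filter_update_iff (s : Finset ℕ) (p : ℕ → Bool) {i : ℕ} (hi : i ∈ s)
    {b : Bool} (hb : b ≠ p i) :
    Even (s.filter fun k => Function.update p i b k = true).card ↔
      ¬ Even (s.filter fun k => p k = true).card := by
  have split : ∀ q : ℕ → Bool, (s.filter fun k => q k = true).card =
      ((s.erase i).filter fun k => q k = true).card + if q i = true then 1 else 0 := by
    intro q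
    conv_lhs => rw [← Finset.insert_erase hi, Finset.filter_insert]
    split_ifs <;> simp
  have off_i : ((s.erase i).filter fun k => Function.update p i b k = true) =
      (s.erase i).filter fun k => p k = true :=
    Finset.filter_congr fun k hk => by rw [Function.update_of_ne (Finset.ne_of_mem_erase hk)]
  rw [split, split p, off_i, Function.update_self]
  cases b <;> cases hp : p i <;> simp_all [Nat.even_add_one]

theorem SimpleGraph.exists_chord_of_adj {V : Type*} {H : SimpleGraph V} {n : ℕ} {v : ℕ → V}
    {i j : ℕ} (hi : i < n) (hj : j < n) (hij : i ≠ j) (hj1 : j ≠ (i + 1) % n)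
    (hi1 : i ≠ (j + 1) % n) (hadj : H.Adj (v i) (v j)) :
    ∃ a b, a < b ∧ b < n ∧ b ≠ a + 1 ∧ ¬(a = 0 ∧ b = n - 1) ∧ H.Adj (v a) (v b) := by
  wlog hlt : i < j generalizing i j
  · exact this hj hi hij.symm hi1 hj1 hadj.symm (by omega)
  refine ⟨i, j, hlt, hj, fun h => hj1 ?_, fun ⟨hi0, hjn⟩ => hi1 ?_, hadj⟩
  · rw [h, Nat.mod_eq_of_lt (by omega)]
  · rw [hi0, hjn, Nat.sub_add_cancel (by omega), Nat.mod_self]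

namespace SignedGraph

variable {V : Type*} {G : SignedGraph V}

theorem EdgeAdj.symm {s : Bool} {u w : V} (h : G.EdgeAdj s u w) : G.EdgeAdj s w u := by
  cases s <;> exact SimpleGraph.Adj.symm h

theorem EdgeAdj.ne {s : Bool} {u w : V} (h : G.EdgeAdj s u w) : u ≠ w := by
  cases s
  exacts [G.pos.ne_of_adj h, G.neg.ne_of_adj h]

theorem exists_edgeAdj_iff {u w : V} :
    (∃ s, G.EdgeAdj s u w) ↔ G.pos.Adj u w ∨ G.neg.Adj u w :=
  ⟨fun ⟨s, h⟩ => by cases s; exacts [Or.inl h, Or.inr h],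
    fun h => h.elim (fun h => ⟨false, h⟩) fun h => ⟨true, h⟩⟩

namespace Cycle

theorem exists_isChord_of_balanced (hI : G.BalancedChordal) (C : G.Cycle) (hC : 4 ≤ C.n)
    (hB : C.Balanced) : ∃ i j, C.IsChord i j := by
  obtain ⟨i, j, -, -, hchord, -⟩ := hI C hC hB
  exact ⟨i, j, hchord⟩

theorem exists_isChord_of_not_isInduced (C : G.Cycle)
    (hsingle : ∀ i < C.n, ∀ s, G.EdgeAdj s (C.vert i) (C.vert ((i + 1) % C.n)) → s = C.sgn i)
    (hC : ¬ C.IsInduced) : ∃ i j, C.IsChord i j := by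
  simp only [IsInduced, not_forall, iff_iff_implies_and_implies, not_and_or] at hC
  obtain ⟨i, j, hi, hj, s, ⟨hadj, hnot⟩ | ⟨hcycle, hnadj⟩⟩ := hC
  · refine ⟨i, j, hi, hj, hadj.ne ∘ congrArg C.vert, fun hji => ?_, fun hij => ?_,
      exists_edgeAdj_iff.1 ⟨s, hadj⟩⟩
    · subst hji
      exact hnot (.inl ⟨rfl, (hsingle i hi s hadj).symm⟩)
    · subst hij
      exact hnot (.inr ⟨rfl, (hsingle j hj s hadj.symm).symm⟩)
  · rcases hcycle with ⟨rfl, rfl⟩ | ⟨rfl, rfl⟩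
    exacts [(hnadj (C.adj i hi)).elim, (hnadj (C.adj j hj).symm).elim]

theorem exists_isChord (hI : G.BalancedChordal) (hII : G.NoInducedUnbalancedCycle)
    (C : G.Cycle) (hC : 4 ≤ C.n) : ∃ i j, C.IsChord i j := by
  by_cases hB : C.Balanced
  · exact C.exists_isChord_of_balanced hI hC hB
  by_cases hsingle :
      ∀ i < C.n, ∀ s, G.EdgeAdj s (C.vert i) (C.vert ((i + 1) % C.n)) → s = C.sgn i
  · exact C.exists_isChord_of_not_isInduced hsingle fun hind => hII ⟨C, hind, hB⟩
  push Not at hsingle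
  obtain ⟨i, hi, s, hs, hsi⟩ := hsingle
  let C' : G.Cycle :=
    { C with
      sgn := Function.update C.sgn i s
      adj := fun k hk => by
        rcases eq_or_ne k i with rfl | hki
        · simpa using hs
        · simpa [Function.update_of_ne hki] using C.adj k hk }
  have hB' : C'.Balanced :=
    (Finset.even_card_filter_update_iff _ _ (Finset.mem_range.2 hi) hsi).2 hB
  exact C'.exists_isChord_of_balanced hI hC hB'

end Cycle

end SignedGraph

/-- **Proposition 3.2.** If `G` satisfies conditions (I) and (II), then the underlying
simple graph `G̃⁺ = G⁺ ∪ G⁻` is chordal. -/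
theorem underlying_chordal {V : Type} (G : SignedGraph V)
    (hI : G.BalancedChordal) (hII : G.NoInducedUnbalancedCycle) :
    (G.pos ⊔ G.neg).IsChordalGraph := by
  intro n hn v hinj hadj
  choose! sgn hsgn using fun i hi => SignedGraph.exists_edgeAdj_iff.2 (hadj i hi)
  let C : G.Cycle := ⟨n, by omega, v, hinj, sgn, hsgn⟩
  obtain ⟨i, j, hi, hj, hij, hj1, hi1, hchord⟩ := C.exists_isChord hI hII hn
  exact SimpleGraph.exists_chord_of_adj hi hj hij hj1 hi1 hchord
end

section
/- Let G be a signed graph and let G̃=(G⁺∪G⁻, G⁺∩G⁻). If a vertex v is link simplicial in G, then v is link simplicial in G̃. -/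
open scoped Classical

universe u v

namespace SignedGraph

variable {V : Type u} {G : SignedGraph V} {v u w : V}

lemma even_cond_add_cond_add_cond_iff (s s' s'' : Bool) :
    Even (cond s 1 0 + cond s' 1 0 + cond s'' 1 0 : ℕ) ↔ s'' = (s ^^ s') := by
  cases s <;> cases s' <;> cases s'' <;> decide

theorem linkSimplicial_iff : G.LinkSimplicial v ↔
    ∀ (u u' : V) (s s' : Bool), u ≠ u' → G.EdgeAdj s v u → G.EdgeAdj s' v u' →
      G.EdgeAdj (s ^^ s') u u' := by
  simp only [LinkSimplicial, even_cond_add_cond_add_cond_iff, exists_eq_right]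

@[simp]
lemma tilde_edgeAdj_false : G.tilde.EdgeAdj false u w ↔ ∃ t, G.EdgeAdj t u w := by
  simp [tilde, EdgeAdj, Bool.exists_bool]

@[simp]
lemma tilde_edgeAdj_true : G.tilde.EdgeAdj true u w ↔ ∀ t, G.EdgeAdj t u w := by
  simp [tilde, EdgeAdj, Bool.forall_bool]

end SignedGraph

/-- **Proposition 3.3 (first part).** A link-simplicial vertex of `G` is link simplicial in
`G̃ = (G⁺ ∪ G⁻, G⁺ ∩ G⁻)`. -/
theorem linkSimplicial_tilde {V : Type} (G : SignedGraph V) (v : V)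
    (h : G.LinkSimplicial v) : G.tilde.LinkSimplicial v := by
  rw [SignedGraph.linkSimplicial_iff] at h ⊢
  intro u u' s s' hne hu hu'
  cases s <;> cases s' <;>
    simp only [SignedGraph.tilde_edgeAdj_false, SignedGraph.tilde_edgeAdj_true,
      Bool.false_xor, Bool.xor_false, Bool.xor_self] at hu hu' ⊢
  · obtain ⟨t, ht⟩ := hu
    obtain ⟨t', ht'⟩ := hu'
    exact ⟨_, h u u' t t' hne ht ht'⟩
  · -- an edge `vu` of sign `t` and a double edge `vu'` force both signs `t ^^ t'` on `uu'`
    obtain ⟨t, ht⟩ := hu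
    intro r
    simpa using h u u' t (t ^^ r) hne ht (hu' _)
  · obtain ⟨t', ht'⟩ := hu'
    intro r
    simpa using h u u' (r ^^ t') t' hne (hu _) ht'
  · exact ⟨_, h u u' false false hne (hu false) (hu' false)⟩
end
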